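/- arXiv:1407.5833 — 12 statements merged into one kernel-verified Lean document; each statement's English description precedes it below -/
import Mathlib

section
/- If $G$ is a twin-free graph on $n$ vertices whose closed neighbourhood hypergraph has VC-dimension at most $d$, then every identifying code of $G$ has size at least $(n-1)^{1/d}$. -/
/-!
The map sending a vertex to the trace of its closed neighbourhood on the code `C` is injective,
so the trace family on `C` has `n` members. By Pajor's form of the Sauer–Shelah lemma it has at
most as many members as shattered sets; a set shattered by the traces lies in `C` and is shattered
by the closed neighbourhoods, hence has at most `d` elements. Thus
`n ≤ ∑_{i ≤ d} (|C| choose i) ≤ |C|^d + 1`.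
-/

open Finset

theorem Nat.sum_range_choose_le_pow_add_one (m : ℕ) :
    ∀ d : ℕ, ∑ i ∈ range (d + 1), m.choose i ≤ m ^ d + 1
  | 0 => by simp
  | 1 => by simp [sum_range_succ, Nat.add_comm]
  | d + 2 => by
    have ih : ∑ i ∈ range (d + 2), m.choose i ≤ m ^ (d + 1) + 1 :=
      Nat.sum_range_choose_le_pow_add_one m (d + 1)
    have hstep : m.choose (d + 2) ≤ m ^ (d + 1) * (m - 1) :=
      calc m.choose (d + 2) ≤ m.choose (d + 2) * (d + 2) := Nat.le_mul_of_pos_right _ (by omega)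
        _ = m.choose (d + 1) * (m - (d + 1)) := Nat.choose_succ_right_eq m (d + 1)
        _ ≤ m ^ (d + 1) * (m - 1) := Nat.mul_le_mul (Nat.choose_le_pow m _) (by omega)
    have hpow : m ^ (d + 1) * (m - 1) + m ^ (d + 1) = m ^ (d + 2) := by
      rcases m with _ | m
      · simp
      · simp only [Nat.add_sub_cancel]; ring
    rw [sum_range_succ]
    omega

theorem Finset.card_le_sum_choose_of_shatters {α : Type*} [DecidableEq α]
    {𝒜 : Finset (Finset α)} {C : Finset α} {d : ℕ} (hC : ∀ u ∈ 𝒜, u ⊆ C)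
    (hd : ∀ s, 𝒜.Shatters s → #s ≤ d) :
    #𝒜 ≤ ∑ i ∈ range (d + 1), (#C).choose i := by
  simp_rw [← card_powersetCard]
  refine (card_le_card_shatterer 𝒜).trans <|
    (card_le_card fun s hs ↦ mem_biUnion.2 ⟨#s, ?_⟩).trans card_biUnion_le
  have hs := mem_shatterer.1 hs
  obtain ⟨u, hu, hsu⟩ := hs.exists_superset
  exact ⟨mem_range.2 (Nat.lt_succ_of_le (hd s hs)), mem_powersetCard.2 ⟨hsu.trans (hC u hu), rfl⟩⟩

namespace SimpleGraph

variable {V : Type*} (G : SimpleGraph V) [DecidableEq V] [DecidableRel G.Adj]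

def closedNbhdTrace (C : Finset V) (v : V) : Finset V :=
  C.filter fun c ↦ c = v ∨ G.Adj v c

theorem closedNbhdTrace_injective {C : Finset V}
    (hsep : ∀ u v : V,
      {c : V | c ∈ C ∧ (c = u ∨ G.Adj u c)} = {c : V | c ∈ C ∧ (c = v ∨ G.Adj v c)} → u = v) :
    Function.Injective (G.closedNbhdTrace C) := fun u v huv ↦
  hsep u v <| by simpa [Set.ext_iff, Finset.ext_iff, closedNbhdTrace] using huv

theorem closedNbhdTrace_subset (C : Finset V) (v : V) : G.closedNbhdTrace C v ⊆ C :=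
  filter_subset _ _

theorem shatters_of_shatters_image_closedNbhdTrace [Fintype V] {C s : Finset V}
    (hs : (univ.image (G.closedNbhdTrace C)).Shatters s) :
    ∀ S ⊆ (s : Set V), ∃ w : V, {x ∈ (s : Set V) | x = w ∨ G.Adj w x} = S := by
  intro S hS
  classical
  have hsC : s ⊆ C := by
    obtain ⟨_, hu, hsu⟩ := hs.exists_superset
    obtain ⟨v, -, rfl⟩ := mem_image.1 hu
    exact hsu.trans (G.closedNbhdTrace_subset C v)
  obtain ⟨u, hu, hw⟩ := hs (filter_subset (· ∈ S) s)
  obtain ⟨w, -, rfl⟩ := mem_image.1 hu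
  refine ⟨w, Set.ext fun x ↦ ?_⟩
  have hx := congrArg (x ∈ ·) hw
  simp only [mem_inter, mem_filter, closedNbhdTrace, eq_iff_iff] at hx
  have hxs : x ∈ S → x ∈ s := @hS x
  have hxC : x ∈ s → x ∈ C := @hsC x
  simp only [Set.mem_ofPred_eq, mem_coe]
  tauto

end SimpleGraph

theorem Real.rpow_one_div_natCast_le_of_le_pow {x y : ℝ} {d : ℕ} (hx : 0 ≤ x) (hy : 0 ≤ y)
    (hd : d ≠ 0) (hxy : x ≤ y ^ d) : x ^ (1 / (d : ℝ)) ≤ y := by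
  rw [one_div, Real.rpow_inv_le_iff_of_pos hx hy (by positivity), Real.rpow_natCast]
  exact hxy

theorem stmt1_general {V : Type*} [Fintype V] (G : SimpleGraph V) (d : ℕ) (hd : 1 ≤ d)
    (hn : 1 ≤ Fintype.card V)
    (hVC : ∀ X : Finset V,
      (∀ S ⊆ (X : Set V), ∃ w : V, {x ∈ (X : Set V) | x = w ∨ G.Adj w x} = S) → X.card ≤ d)
    (C : Finset V)
    (hsep : ∀ u v : V,
      {c : V | c ∈ C ∧ (c = u ∨ G.Adj u c)} = {c : V | c ∈ C ∧ (c = v ∨ G.Adj v c)} → u = v) :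
    ((Fintype.card V : ℝ) - 1) ^ (1 / (d : ℝ)) ≤ (C.card : ℝ) := by
  classical
  have hcard : Fintype.card V ≤ C.card ^ d + 1 :=
    calc Fintype.card V = #(univ.image (G.closedNbhdTrace C)) :=
          (card_image_of_injective _ (G.closedNbhdTrace_injective hsep)).symm
      _ ≤ ∑ i ∈ range (d + 1), (#C).choose i := card_le_sum_choose_of_shatters
          (by simpa using G.closedNbhdTrace_subset C)
          fun s hs ↦ hVC s (G.shatters_of_shatters_image_closedNbhdTrace hs)
      _ ≤ C.card ^ d + 1 := Nat.sum_range_choose_le_pow_add_one _ d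
  have hn' : (1 : ℝ) ≤ Fintype.card V := by exact_mod_cast hn
  have hcard' : (Fintype.card V : ℝ) ≤ (C.card : ℝ) ^ d + 1 := by exact_mod_cast hcard
  exact Real.rpow_one_div_natCast_le_of_le_pow (by linarith) C.card.cast_nonneg (by omega)
    (by linarith)

/-- If `G` is a twin-free graph on `n ≥ 1` vertices whose closed neighbourhood hypergraph has
VC-dimension at most `d ≥ 1`, then every identifying code of `G` has size at least
`(n-1)^(1/d)`. -/
theorem stmt1 {V : Type*} [Fintype V] (G : SimpleGraph V) (d : ℕ) (hd : 1 ≤ d)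
    (hn : 1 ≤ Fintype.card V)
    (htwinfree : ∀ u v : V,
      {w : V | w = u ∨ G.Adj u w} = {w : V | w = v ∨ G.Adj v w} → u = v)
    (hVC : ∀ X : Finset V,
      (∀ S ⊆ (X : Set V), ∃ w : V, {x ∈ (X : Set V) | x = w ∨ G.Adj w x} = S) → X.card ≤ d)
    (C : Finset V)
    (hdom : ∀ v : V, ∃ c ∈ C, c = v ∨ G.Adj v c)
    (hsep : ∀ u v : V,
      {c : V | c ∈ C ∧ (c = u ∨ G.Adj u c)} = {c : V | c ∈ C ∧ (c = v ∨ G.Adj v c)} → u = v) :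
    ((Fintype.card V : ℝ) - 1) ^ (1 / (d : ℝ)) ≤ (C.card : ℝ) :=
  stmt1_general G d hd hn hVC C hsep
end

section
/- Every graph of girth at least 5 has VC-dimension at most 2, i.e. no set of 3 vertices is shattered by closed neighbourhoods. -/
open SimpleGraph

lemma noTri {V : Type*} {G : SimpleGraph V} (hg : 5 ≤ G.egirth) {a b c : V}
    (hab : G.Adj a b) (hbc : G.Adj b c) (hca : G.Adj c a) : False := by
  have h := SimpleGraph.le_egirth.mp hg a
    (Walk.cons hab (Walk.cons hbc (Walk.cons hca Walk.nil)))
    (by simp [Walk.isCycle_def, Walk.isTrail_def, List.nodup_cons, hab.ne, hbc.ne, hca.ne',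
      hab.ne', hbc.ne', hca.ne, Sym2.eq_iff])
  norm_num [Walk.length_cons] at h

lemma noSq {V : Type*} {G : SimpleGraph V} (hg : 5 ≤ G.egirth) {a b c d : V}
    (hab : G.Adj a b) (hbc : G.Adj b c) (hcd : G.Adj c d) (hda : G.Adj d a)
    (hac : a ≠ c) (hbd : b ≠ d) : False := by
  have h := SimpleGraph.le_egirth.mp hg a
    (Walk.cons hab (Walk.cons hbc (Walk.cons hcd (Walk.cons hda Walk.nil))))
    (by simp [Walk.isCycle_def, Walk.isTrail_def, List.nodup_cons, hab.ne, hbc.ne, hcd.ne,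
      hda.ne', hab.ne', hbc.ne', hcd.ne', hda.ne, hac, hbd, hac.symm, hbd.symm, Sym2.eq_iff])
  norm_num [Walk.length_cons] at h

/-- Hub inside: `a` adjacent to `b` and `c`, and there is a witness for `{b,c}`. -/
lemma caseA {V : Type*} {G : SimpleGraph V} (hg : 5 ≤ G.egirth) {a b c w : V}
    (hbc : b ≠ c) (hab : G.Adj a b) (hac : G.Adj a c)
    (hwa : ¬ (a = w ∨ G.Adj w a)) (hwb : b = w ∨ G.Adj w b) (hwc : c = w ∨ G.Adj w c) :
    False := by
  push_neg at hwa
  obtain ⟨haw, hwa⟩ := hwa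
  rcases hwb with rfl | hwb
  · rcases hwc with rfl | hwc
    · exact hbc rfl
    · exact noTri hg hab hwc hac.symm
  rcases hwc with rfl | hwc
  · exact noTri hg hac hwb hab.symm
  · exact noSq hg hab hwb.symm hwc hac.symm haw hbc

/-- Hub outside: `d` adjacent to `a`, `b`, `c`, and there is a witness for `{a,b}`. -/
lemma caseB {V : Type*} {G : SimpleGraph V} (hg : 5 ≤ G.egirth) {a b c d w : V}
    (hab : a ≠ b) (hda : G.Adj d a) (hdb : G.Adj d b) (hdc : G.Adj d c)
    (hwc : ¬ (c = w ∨ G.Adj w c)) (hwa : a = w ∨ G.Adj w a) (hwb : b = w ∨ G.Adj w b) :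
    False := by
  push_neg at hwc
  have hwd : w ≠ d := by rintro rfl; exact hwc.2 hdc
  rcases hwa with rfl | hwa
  · rcases hwb with rfl | hwb
    · exact hab rfl
    · exact noTri hg hda hwb hdb.symm
  rcases hwb with rfl | hwb
  · exact noTri hg hdb hwa hda.symm
  · exact noSq hg hwa.symm hwb hdb.symm hda hab hwd

/-- Every graph of girth at least 5 has VC-dimension at most 2: every set of vertices
shattered by closed neighbourhoods has size at most 2. -/
theorem stmt2 {V : Type*} (G : SimpleGraph V) (hg : 5 ≤ G.egirth)
    (X : Finset V)
    (hsh : ∀ S ⊆ (X : Set V), ∃ w : V, {x ∈ (X : Set V) | x = w ∨ G.Adj w x} = S) :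
    X.card ≤ 2 := by
  by_contra h
  push_neg at h
  obtain ⟨a, b, c, ha, hb, hc, hab, hac, hbc⟩ := Finset.two_lt_card_iff.mp h
  -- extract a witness for any pair {x, y} ⊆ {a,b,c}, avoiding z
  have pair : ∀ x y z : V, x ∈ X → y ∈ X → z ∈ X → z ≠ x → z ≠ y →
      ∃ w : V, ¬ (z = w ∨ G.Adj w z) ∧ (x = w ∨ G.Adj w x) ∧ (y = w ∨ G.Adj w y) := by
    intro x y z hx hy hz hzx hzy
    obtain ⟨w, hw⟩ := hsh {x, y} (by
      rintro v (rfl | rfl) <;> simpa using ‹_›)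
    refine ⟨w, ?_, ?_, ?_⟩
    · intro hcon
      have : z ∈ ({x, y} : Set V) := hw ▸ ⟨hz, hcon⟩
      rcases this with rfl | rfl
      · exact hzx rfl
      · exact hzy rfl
    · have : x ∈ ({x, y} : Set V) := by simp
      rw [← hw] at this; exact this.2
    · have : y ∈ ({x, y} : Set V) := by simp
      rw [← hw] at this; exact this.2
  -- witness for {a,b,c}
  obtain ⟨d, hd⟩ := hsh {a, b, c} (by rintro v (rfl | rfl | rfl) <;> simpa using ‹_›)
  have hda : a = d ∨ G.Adj d a := by
    have : a ∈ ({a,b,c} : Set V) := by simp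
    rw [← hd] at this; exact this.2
  have hdb : b = d ∨ G.Adj d b := by
    have : b ∈ ({a,b,c} : Set V) := by simp
    rw [← hd] at this; exact this.2
  have hdc : c = d ∨ G.Adj d c := by
    have : c ∈ ({a,b,c} : Set V) := by simp
    rw [← hd] at this; exact this.2
  rcases hda with rfl | hda
  · -- hub is a
    have hab' : G.Adj a b := by rcases hdb with rfl | h; exact absurd rfl hab; exact h
    have hac' : G.Adj a c := by rcases hdc with rfl | h; exact absurd rfl hac; exact h
    obtain ⟨w, h1, h2, h3⟩ := pair b c a hb hc ha hab hac
    exact caseA hg hbc hab' hac' h1 h2 h3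
  rcases hdb with rfl | hdb
  · -- hub is b
    have hbc' : G.Adj b c := by rcases hdc with rfl | h; exact absurd rfl hbc; exact h
    obtain ⟨w, h1, h2, h3⟩ := pair a c b ha hc hb (Ne.symm hab) hbc
    exact caseA hg hac hda hbc' h1 h2 h3
  rcases hdc with rfl | hdc
  · -- hub is c
    obtain ⟨w, h1, h2, h3⟩ := pair a b c ha hb hc (Ne.symm hac) (Ne.symm hbc)
    exact caseA hg hab hda hdb h1 h2 h3
  · -- hub d outside {a,b,c}
    obtain ⟨w, h1, h2, h3⟩ := pair a b c ha hb hc (Ne.symm hac) (Ne.symm hbc)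
    exact caseB hg hab hda hdb hdc h1 h2 h3
end

section
/- Every interval graph has VC-dimension at most 2: in any family of intervals on the real line, no set of 3 intervals is shattered by the closed neighbourhoods of the corresponding interval graph. -/
lemma stmt3_aux {ι : Type*} (l r : ι → ℝ) (x y z : ι)
    (hyx : y ≠ x) (hyz : y ≠ z) (h1 : l x ≤ l y) (h2 : l y ≤ l z)
    (H : ∀ S ⊆ ({x, y, z} : Set ι), ∃ w : ι,
        {t ∈ ({x, y, z} : Set ι) | l t ≤ r w ∧ l w ≤ r t} = S) : False := by
  obtain ⟨w, hw⟩ := H {x, z} (by intro t ht; rcases ht with h | h <;> simp [h])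
  have hxw : x ∈ {t ∈ ({x, y, z} : Set ι) | l t ≤ r w ∧ l w ≤ r t} := by
    rw [hw]; simp
  have hzw : z ∈ {t ∈ ({x, y, z} : Set ι) | l t ≤ r w ∧ l w ≤ r t} := by
    rw [hw]; simp
  have hyw : y ∉ {t ∈ ({x, y, z} : Set ι) | l t ≤ r w ∧ l w ≤ r t} := by
    rw [hw]; simp [hyx, hyz]
  simp only [Set.mem_setOf_eq, Set.mem_insert_iff, Set.mem_singleton_iff] at hxw hzw hyw
  have hy' : ¬ (l y ≤ r w ∧ l w ≤ r y) := fun h => hyw ⟨by simp, h⟩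
  rcases not_and_or.mp hy' with h | h
  · -- r w < l y, but l z ≤ r w and l y ≤ l z
    push_neg at h
    exact absurd (hzw.2.1.trans_lt h) (not_lt.mpr h2)
  · -- r y < l w ≤ r x, so y ⊆ x's interval
    push_neg at h
    have hrw : l w ≤ r x := hxw.2.2
    obtain ⟨u, hu⟩ := H {y} (by intro t ht; simp at ht; simp [ht])
    have hyu : y ∈ {t ∈ ({x, y, z} : Set ι) | l t ≤ r u ∧ l u ≤ r t} := by
      rw [hu]; simp
    have hxu : x ∉ {t ∈ ({x, y, z} : Set ι) | l t ≤ r u ∧ l u ≤ r t} := by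
      rw [hu]; simp [hyx.symm]
    simp only [Set.mem_setOf_eq, Set.mem_insert_iff, Set.mem_singleton_iff] at hyu hxu
    exact hxu ⟨by simp, h1.trans hyu.2.1, hyu.2.2.trans (le_of_lt (h.trans_le hrw))⟩

/-- Interval graphs have VC-dimension at most 2: for any family of closed intervals
`[l i, r i]` on the real line, no set of 3 intervals is shattered by the closed
neighbourhoods of the corresponding interval graph (two intervals are adjacent iff
they intersect, i.e. `l x ≤ r w ∧ l w ≤ r x`). -/
theorem stmt3 {ι : Type*} (l r : ι → ℝ) (hlr : ∀ i, l i ≤ r i)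
    (a b c : ι) (hab : a ≠ b) (hac : a ≠ c) (hbc : b ≠ c) :
    ¬ (∀ S ⊆ ({a, b, c} : Set ι), ∃ w : ι,
        {x ∈ ({a, b, c} : Set ι) | l x ≤ r w ∧ l w ≤ r x} = S) := by
  intro H
  have hbac : ({b, a, c} : Set ι) = {a, b, c} := by ext t; simp; tauto
  have hacb : ({a, c, b} : Set ι) = {a, b, c} := by ext t; simp; tauto
  have hcab : ({c, a, b} : Set ι) = {a, b, c} := by ext t; simp; tauto
  have hbca : ({b, c, a} : Set ι) = {a, b, c} := by ext t; simp; tauto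
  have hcba : ({c, b, a} : Set ι) = {a, b, c} := by ext t; simp; tauto
  rcases le_total (l a) (l b) with h1 | h1
  · rcases le_total (l b) (l c) with h2 | h2
    · exact stmt3_aux l r a b c hab.symm hbc h1 h2 H
    · rcases le_total (l a) (l c) with h3 | h3
      · exact stmt3_aux l r a c b hac.symm (Ne.symm hbc) h3 h2 (hacb ▸ H)
      · exact stmt3_aux l r c a b hac hab h3 h1 (hcab ▸ H)
  · rcases le_total (l a) (l c) with h2 | h2
    · exact stmt3_aux l r b a c hab hac h1 h2 (hbac ▸ H)
    · rcases le_total (l b) (l c) with h3 | h3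
      · exact stmt3_aux l r b c a (Ne.symm hbc) (Ne.symm hac) h3 h2 (hbca ▸ H)
      · exact stmt3_aux l r c b a hbc (Ne.symm hab) h3 h1 (hcba ▸ H)
end

section
/- Every chordal bipartite graph has VC-dimension at most 3: no set of 4 vertices can be shattered by closed neighbourhoods. -/
/-- Every chordal bipartite graph (bipartite with no induced cycle of length ≥ 6)
has VC-dimension at most 3: no set of 4 vertices is shattered by closed neighbourhoods. -/
theorem stmt4 {V : Type*} (G : SimpleGraph V)
    (hbip : ∃ c : V → Bool, ∀ u v : V, G.Adj u v → c u ≠ c v)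
    (hchordal : ∀ n : ℕ, 6 ≤ n → IsEmpty (SimpleGraph.cycleGraph n ↪g G))
    (X : Finset V)
    (hsh : ∀ S ⊆ (X : Set V), ∃ w : V, {x ∈ (X : Set V) | x = w ∨ G.Adj w x} = S) :
    X.card ≤ 3 := by
  classical
  by_contra hcard
  push_neg at hcard
  obtain ⟨c, hc⟩ := hbip
  -- a vertex covering all of X
  obtain ⟨w0, hw0⟩ := hsh (X : Set V) le_rfl
  have hcov : ∀ x ∈ X, x = w0 ∨ G.Adj w0 x := fun x hx =>
    ((Set.ext_iff.mp hw0 x).mpr hx).2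
  -- three distinct vertices of X different from w0
  have hcard3 : 2 < (X.erase w0).card := by
    have := Finset.pred_card_le_card_erase (s := X) (a := w0)
    omega
  obtain ⟨a, b, d, ha', hb', hd', hab, had, hbd⟩ := Finset.two_lt_card_iff.mp hcard3
  have haX : a ∈ X := Finset.mem_of_mem_erase ha'
  have hbX : b ∈ X := Finset.mem_of_mem_erase hb'
  have hdX : d ∈ X := Finset.mem_of_mem_erase hd'
  have haw0 : G.Adj w0 a := (hcov a haX).resolve_left (Finset.ne_of_mem_erase ha')
  have hbw0 : G.Adj w0 b := (hcov b hbX).resolve_left (Finset.ne_of_mem_erase hb')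
  have hdw0 : G.Adj w0 d := (hcov d hdX).resolve_left (Finset.ne_of_mem_erase hd')
  -- a, b, d all have the same colour
  have hca : c a = c b := by
    have h1 := hc _ _ haw0; have h2 := hc _ _ hbw0
    cases h : c w0 <;> cases h1' : c a <;> cases h2' : c b <;> simp_all
  have hcd : c a = c d := by
    have h1 := hc _ _ haw0; have h2 := hc _ _ hdw0
    cases h : c w0 <;> cases h1' : c a <;> cases h2' : c d <;> simp_all
  -- pair witnesses
  have pair : ∀ u v : V, u ∈ X → v ∈ X → u ≠ v → c u = c v →
      ∃ w, G.Adj w u ∧ G.Adj w v ∧ ∀ x ∈ X, (x = w ∨ G.Adj w x) → (x = u ∨ x = v) := by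
    intro u v huX hvX huv hcuv
    obtain ⟨w, hw⟩ := hsh {u, v} (by
      intro x hx; rcases hx with rfl | rfl
      · exact huX
      · exact hvX)
    have hu := (Set.ext_iff.mp hw u).mpr (by left; rfl)
    have hv := (Set.ext_iff.mp hw v).mpr (by right; rfl)
    have hwu : w ≠ u := by
      rintro rfl
      rcases hv.2 with h | h
      · exact huv h.symm
      · exact hc _ _ h hcuv
    have hwv : w ≠ v := by
      rintro rfl
      rcases hu.2 with h | h
      · exact huv h
      · exact hc _ _ h.symm hcuv
    refine ⟨w, hu.2.resolve_left (fun h => hwu h.symm),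
      hv.2.resolve_left (fun h => hwv h.symm), ?_⟩
    intro x hx hx'
    exact (Set.ext_iff.mp hw x).mp ⟨hx, hx'⟩
  obtain ⟨w1, hw1a, hw1b, hw1P⟩ := pair a b haX hbX hab hca
  obtain ⟨w2, hw2b, hw2d, hw2P⟩ := pair b d hbX hdX hbd (hca ▸ hcd)
  obtain ⟨w3, hw3a, hw3d, hw3P⟩ := pair a d haX hdX had hcd
  -- each wᵢ misses the third vertex
  have hw1d : ¬ (d = w1 ∨ G.Adj w1 d) := by
    intro h; rcases hw1P d hdX h with h' | h'
    · exact had h'.symm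
    · exact hbd h'.symm
  have hw2a : ¬ (a = w2 ∨ G.Adj w2 a) := by
    intro h; rcases hw2P a haX h with h' | h'
    · exact hab h'
    · exact had h'
  have hw3b : ¬ (b = w3 ∨ G.Adj w3 b) := by
    intro h; rcases hw3P b hbX h with h' | h'
    · exact hab h'.symm
    · exact hbd h'
  have hnw1d : ¬ G.Adj w1 d := fun h => hw1d (Or.inr h)
  have hnw2a : ¬ G.Adj w2 a := fun h => hw2a (Or.inr h)
  have hnw3b : ¬ G.Adj w3 b := fun h => hw3b (Or.inr h)
  have hdw1 : d ≠ w1 := fun h => hw1d (Or.inl h)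
  have haw2 : a ≠ w2 := fun h => hw2a (Or.inl h)
  have hbw3 : b ≠ w3 := fun h => hw3b (Or.inl h)
  -- colours of the wᵢ
  have hcw1 : c w1 = c a → False := fun h => hc _ _ hw1a h
  have hcw2 : c w2 = c a → False := fun h => hc _ _ hw2b (h.trans hca)
  have hcw3 : c w3 = c a → False := fun h => hc _ _ hw3a h
  -- wᵢ distinct from a, b, d
  have hw1a' : w1 ≠ a := fun h => hcw1 (h ▸ rfl)
  have hw1b' : w1 ≠ b := fun h => hcw1 (by rw [h, hca])
  have hw2b' : w2 ≠ b := fun h => hcw2 (by rw [h, hca])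
  have hw2d' : w2 ≠ d := fun h => hcw2 (by rw [h, hcd])
  have hw3a' : w3 ≠ a := fun h => hcw3 (h ▸ rfl)
  have hw3d' : w3 ≠ d := fun h => hcw3 (by rw [h, hcd])
  -- wᵢ pairwise distinct
  have h12 : w1 ≠ w2 := by
    rintro rfl
    rcases hw2P a haX (Or.inr hw1a) with h | h
    · exact hab h
    · exact had h
  have h13 : w1 ≠ w3 := by
    rintro rfl
    rcases hw3P b hbX (Or.inr hw1b) with h | h
    · exact hab h.symm
    · exact hbd h
  have h23 : w2 ≠ w3 := by
    rintro rfl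
    rcases hw3P b hbX (Or.inr hw2b) with h | h
    · exact hab h.symm
    · exact hbd h
  -- non-adjacencies from equal colours
  have same : ∀ u v : V, c u = c v → ¬ G.Adj u v := fun u v h hadj => hc _ _ hadj h
  have nab : ¬ G.Adj a b := same _ _ hca
  have nad : ¬ G.Adj a d := same _ _ hcd
  have nbd : ¬ G.Adj b d := same _ _ (hca ▸ hcd)
  have cw1 : c w1 = !c a := Bool.eq_not_iff.mpr hcw1
  have cw2 : c w2 = !c a := Bool.eq_not_iff.mpr hcw2
  have cw3 : c w3 = !c a := Bool.eq_not_iff.mpr hcw3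
  have n12 : ¬ G.Adj w1 w2 := same _ _ (cw1.trans cw2.symm)
  have n13 : ¬ G.Adj w1 w3 := same _ _ (cw1.trans cw3.symm)
  have n23 : ¬ G.Adj w2 w3 := same _ _ (cw2.trans cw3.symm)
  -- build an induced 6-cycle  a  w1  b  w2  d  w3
  let f : Fin 6 → V := ![a, w1, b, w2, d, w3]
  have hinj : Function.Injective f := by
    intro i j hij
    fin_cases i <;> fin_cases j
    · rfl
    · exact absurd hij (Ne.symm hw1a')
    · exact absurd hij hab
    · exact absurd hij haw2
    · exact absurd hij had
    · exact absurd hij (Ne.symm hw3a')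
    · exact absurd hij hw1a'
    · rfl
    · exact absurd hij hw1b'
    · exact absurd hij h12
    · exact absurd hij (Ne.symm hdw1)
    · exact absurd hij h13
    · exact absurd hij (Ne.symm hab)
    · exact absurd hij (Ne.symm hw1b')
    · rfl
    · exact absurd hij (Ne.symm hw2b')
    · exact absurd hij hbd
    · exact absurd hij hbw3
    · exact absurd hij (Ne.symm haw2)
    · exact absurd hij (Ne.symm h12)
    · exact absurd hij hw2b'
    · rfl
    · exact absurd hij hw2d'
    · exact absurd hij h23
    · exact absurd hij (Ne.symm had)
    · exact absurd hij hdw1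
    · exact absurd hij (Ne.symm hbd)
    · exact absurd hij (Ne.symm hw2d')
    · rfl
    · exact absurd hij (Ne.symm hw3d')
    · exact absurd hij hw3a'
    · exact absurd hij (Ne.symm h13)
    · exact absurd hij (Ne.symm hbw3)
    · exact absurd hij (Ne.symm h23)
    · exact absurd hij hw3d'
    · rfl
  have hmap : ∀ i j : Fin 6, G.Adj (f i) (f j) ↔ (SimpleGraph.cycleGraph 6).Adj i j := by
    intro i j
    fin_cases i <;> fin_cases j
    · exact iff_of_false G.irrefl (by decide)
    · exact iff_of_true hw1a.symm (by decide)
    · exact iff_of_false nab (by decide)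
    · exact iff_of_false (fun h => hnw2a h.symm) (by decide)
    · exact iff_of_false nad (by decide)
    · exact iff_of_true hw3a.symm (by decide)
    · exact iff_of_true hw1a (by decide)
    · exact iff_of_false G.irrefl (by decide)
    · exact iff_of_true hw1b (by decide)
    · exact iff_of_false n12 (by decide)
    · exact iff_of_false hnw1d (by decide)
    · exact iff_of_false n13 (by decide)
    · exact iff_of_false (fun h => nab h.symm) (by decide)
    · exact iff_of_true hw1b.symm (by decide)
    · exact iff_of_false G.irrefl (by decide)
    · exact iff_of_true hw2b.symm (by decide)
    · exact iff_of_false nbd (by decide)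
    · exact iff_of_false (fun h => hnw3b h.symm) (by decide)
    · exact iff_of_false hnw2a (by decide)
    · exact iff_of_false (fun h => n12 h.symm) (by decide)
    · exact iff_of_true hw2b (by decide)
    · exact iff_of_false G.irrefl (by decide)
    · exact iff_of_true hw2d (by decide)
    · exact iff_of_false n23 (by decide)
    · exact iff_of_false (fun h => nad h.symm) (by decide)
    · exact iff_of_false (fun h => hnw1d h.symm) (by decide)
    · exact iff_of_false (fun h => nbd h.symm) (by decide)
    · exact iff_of_true hw2d.symm (by decide)
    · exact iff_of_false G.irrefl (by decide)
    · exact iff_of_true hw3d.symm (by decide)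
    · exact iff_of_true hw3a (by decide)
    · exact iff_of_false (fun h => n13 h.symm) (by decide)
    · exact iff_of_false hnw3b (by decide)
    · exact iff_of_false (fun h => n23 h.symm) (by decide)
    · exact iff_of_true hw3d (by decide)
    · exact iff_of_false G.irrefl (by decide)
  exact (hchordal 6 le_rfl).false ⟨⟨f, hinj⟩, fun {i j} => hmap i j⟩
end

section
/- In a bipartite graph $G$ with parts $A$ and $B$, if three vertices $x_1, x_2, x_3$ all lie in $A$ and the set $\{x_1,x_2,x_3\}$ is shattered by closed neighbourhoods, then $G$ contains an induced cycle of length 6. -/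
open SimpleGraph

lemma stmt5_aux {V : Type*} (G : SimpleGraph V) (A B : Set V)
    (hcover : ∀ v : V, v ∈ A ∨ v ∈ B)
    (hA : ∀ u ∈ A, ∀ v ∈ A, ¬ G.Adj u v)
    (a b c : V) (ha : a ∈ A) (hb : b ∈ A) (hc : c ∈ A)
    (hab : a ≠ b) (hac : a ≠ c) (hbc : b ≠ c) (w : V)
    (h : {x ∈ ({a, b, c} : Set V) | x = w ∨ G.Adj w x} = {a, b}) :
    G.Adj w a ∧ G.Adj w b ∧ ¬ G.Adj w c ∧ w ∈ B ∧ w ≠ c := by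
  have hmem : ∀ x ∈ ({a, b, c} : Set V), (x = w ∨ G.Adj w x) ↔ x ∈ ({a, b} : Set V) := by
    intro x hx
    constructor
    · intro hp; rw [← h]; exact ⟨hx, hp⟩
    · intro hp
      have := h.ge hp
      exact this.2
  have hma := (hmem a (by simp)).mpr (by simp)
  have hmb := (hmem b (by simp)).mpr (by simp)
  have hmc : ¬ (c = w ∨ G.Adj w c) := by
    intro hp
    have : c ∈ ({a, b} : Set V) := (hmem c (by simp)).mp hp
    rcases this with h' | h' <;> [exact hac h'.symm; exact hbc h'.symm]
  have hadjb : G.Adj w b := by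
    rcases hmb with h' | h'
    · rcases hma with h'' | h''
      · exact absurd (h''.trans h'.symm) hab
      · subst h'; exact absurd h'' (hA b hb a ha)
    · exact h'
  have hadja : G.Adj w a := by
    rcases hma with h' | h'
    · subst h'; exact absurd hadjb (hA a ha b hb)
    · exact h'
  have hwB : w ∈ B := by
    rcases hcover w with h' | h'
    · exact absurd hadja (hA w h' a ha)
    · exact h'
  refine ⟨hadja, hadjb, fun h' => hmc (Or.inr h'), hwB, fun h' => hmc (Or.inl h'.symm)⟩

/-- In a bipartite graph with parts `A`, `B`, if three distinct vertices of `A` form a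
set shattered by closed neighbourhoods, then the graph contains an induced 6-cycle. -/
theorem stmt5 {V : Type*} (G : SimpleGraph V) (A B : Set V)
    (hcover : ∀ v : V, v ∈ A ∨ v ∈ B)
    (hA : ∀ u ∈ A, ∀ v ∈ A, ¬ G.Adj u v) (hB : ∀ u ∈ B, ∀ v ∈ B, ¬ G.Adj u v)
    (x₁ x₂ x₃ : V) (hx₁ : x₁ ∈ A) (hx₂ : x₂ ∈ A) (hx₃ : x₃ ∈ A)
    (h12 : x₁ ≠ x₂) (h13 : x₁ ≠ x₃) (h23 : x₂ ≠ x₃)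
    (hsh : ∀ S ⊆ ({x₁, x₂, x₃} : Set V), ∃ w : V,
        {x ∈ ({x₁, x₂, x₃} : Set V) | x = w ∨ G.Adj w x} = S) :
    Nonempty (SimpleGraph.cycleGraph 6 ↪g G) := by
  obtain ⟨u, hu⟩ := hsh {x₁, x₂} (by intro x hx; simp only [Set.mem_insert_iff, Set.mem_singleton_iff] at hx ⊢; tauto)
  obtain ⟨v, hv⟩ := hsh {x₂, x₃} (by intro x hx; simp only [Set.mem_insert_iff, Set.mem_singleton_iff] at hx ⊢; tauto)
  obtain ⟨p, hp⟩ := hsh {x₁, x₃} (by intro x hx; simp only [Set.mem_insert_iff, Set.mem_singleton_iff] at hx ⊢; tauto)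
  have hX12 : ({x₁, x₂, x₃} : Set V) = {x₂, x₃, x₁} := by
    ext x; simp; tauto
  have hX13 : ({x₁, x₂, x₃} : Set V) = {x₁, x₃, x₂} := by
    ext x; simp; tauto
  obtain ⟨hu1, hu2, hu3, huB, hu3'⟩ :=
    stmt5_aux G A B hcover hA x₁ x₂ x₃ hx₁ hx₂ hx₃ h12 h13 h23 u hu
  obtain ⟨hv2, hv3, hv1, hvB, hv1'⟩ :=
    stmt5_aux G A B hcover hA x₂ x₃ x₁ hx₂ hx₃ hx₁ h23 (Ne.symm h12) (Ne.symm h13) v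
      (by rw [← hX12]; exact hv)
  obtain ⟨hp1, hp3, hp2, hpB, hp2'⟩ :=
    stmt5_aux G A B hcover hA x₁ x₃ x₂ hx₁ hx₃ hx₂ h13 h12 (Ne.symm h23) p
      (by rw [← hX13]; exact hp)
  -- distinctness
  have huv : u ≠ v := fun h => hv1 (h ▸ hu1)
  have hup : u ≠ p := fun h => hp2 (h ▸ hu2)
  have hvp : v ≠ p := fun h => hp2 (h ▸ hv2)
  have hu1' : u ≠ x₁ := fun h => G.irrefl (h ▸ hu1)
  have hu2' : u ≠ x₂ := fun h => G.irrefl (h ▸ hu2)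
  have hv2' : v ≠ x₂ := fun h => G.irrefl (h ▸ hv2)
  have hv3' : v ≠ x₃ := fun h => G.irrefl (h ▸ hv3)
  have hp1' : p ≠ x₁ := fun h => G.irrefl (h ▸ hp1)
  have hp3' : p ≠ x₃ := fun h => G.irrefl (h ▸ hp3)
  -- cycle: x₁, u, x₂, v, x₃, p
  let f : Fin 6 → V := ![x₁, u, x₂, v, x₃, p]
  have hinj : Function.Injective f := by
    intro a b hab
    fin_cases a <;> fin_cases b <;>
      simp only [f, Matrix.cons_val_zero, Matrix.cons_val_one, Matrix.head_cons,
        Fin.isValue, Matrix.cons_val_succ] at hab <;>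
      first
      | rfl
      | (exact absurd hab (by first
          | exact h12 | exact h12.symm | exact h13 | exact h13.symm
          | exact h23 | exact h23.symm | exact huv | exact huv.symm
          | exact hup | exact hup.symm | exact hvp | exact hvp.symm
          | exact hu1' | exact hu1'.symm | exact hu2' | exact hu2'.symm
          | exact hu3' | exact hu3'.symm | exact hv1' | exact hv1'.symm
          | exact hv2' | exact hv2'.symm | exact hv3' | exact hv3'.symm
          | exact hp1' | exact hp1'.symm | exact hp2' | exact hp2'.symm
          | exact hp3' | exact hp3'.symm))
  have hmap : ∀ a b : Fin 6, G.Adj (f a) (f b) ↔ (cycleGraph 6).Adj a b := by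
    intro a b
    fin_cases a <;> fin_cases b <;>
      simp only [f, Matrix.cons_val_zero, Matrix.cons_val_one, Matrix.head_cons,
        Fin.isValue, Matrix.cons_val_succ, cycleGraph_adj] <;>
      first
      | (exact iff_of_true (by first
          | exact hu1.symm | exact hu1 | exact hu2.symm | exact hu2
          | exact hv2.symm | exact hv2 | exact hv3.symm | exact hv3
          | exact hp1.symm | exact hp1 | exact hp3.symm | exact hp3) (by decide))
      | (exact iff_of_false (by first
          | exact G.irrefl
          | exact hA _ hx₁ _ hx₂ | exact hA _ hx₂ _ hx₁
          | exact hA _ hx₁ _ hx₃ | exact hA _ hx₃ _ hx₁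
          | exact hA _ hx₂ _ hx₃ | exact hA _ hx₃ _ hx₂
          | exact hB _ huB _ hvB | exact hB _ hvB _ huB
          | exact hB _ huB _ hpB | exact hB _ hpB _ huB
          | exact hB _ hvB _ hpB | exact hB _ hpB _ hvB
          | exact hu3 | exact fun h => hu3 h.symm
          | exact hv1 | exact fun h => hv1 h.symm
          | exact hp2 | exact fun h => hp2 h.symm) (by decide))
  exact ⟨⟨⟨f, hinj⟩, fun {a b} => hmap a b⟩⟩
end

section
/- If a graph $G$ has VC-dimension at least $k$ (a shattered set of size $k$ exists), then $G$ has an induced subgraph with at least $2^k - 1$ vertices that admits an identifying code of size at most $2k$. -/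
/-- If a graph `G` has a shattered set of size `k`, then `G` has an induced subgraph
(on a vertex set `W`) with at least `2^k - 1` vertices admitting an identifying code
`C ⊆ W` of size at most `2k`. Since `C ⊆ W`, identification in the induced subgraph
on `W` is expressed via neighbourhoods in `G` intersected with `C`. -/
theorem stmt6 {V : Type*} [Fintype V] [DecidableEq V] (G : SimpleGraph V) (k : ℕ)
    (X : Finset V) (hX : X.card = k)
    (hsh : ∀ S ⊆ (X : Set V), ∃ w : V, {x ∈ (X : Set V) | x = w ∨ G.Adj w x} = S) :
    ∃ W C : Finset V, C ⊆ W ∧ 2 ^ k - 1 ≤ W.card ∧ C.card ≤ 2 * k ∧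
      (∀ v ∈ W, ∃ c ∈ C, c = v ∨ G.Adj v c) ∧
      (∀ u ∈ W, ∀ v ∈ W,
        {c : V | c ∈ C ∧ (c = u ∨ G.Adj u c)} = {c : V | c ∈ C ∧ (c = v ∨ G.Adj v c)} →
        u = v) := by
  classical
  obtain ⟨v0, -⟩ := hsh ∅ (by simp)
  -- choose witnesses, preferring witnesses inside X
  have hex : ∀ S : Finset V, ∃ w : V, (S : Set V) ⊆ X →
      (((∃ x ∈ X, {y ∈ (X : Set V) | y = x ∨ G.Adj x y} = (S : Set V)) → w ∈ X) ∧
        {y ∈ (X : Set V) | y = w ∨ G.Adj w y} = (S : Set V)) := by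
    intro S
    by_cases h : ∃ x ∈ X, {y ∈ (X : Set V) | y = x ∨ G.Adj x y} = (S : Set V)
    · obtain ⟨x, hx, hxt⟩ := h
      exact ⟨x, fun _ => ⟨fun _ => hx, hxt⟩⟩
    · by_cases hS : (S : Set V) ⊆ X
      · obtain ⟨w, hw⟩ := hsh S hS
        exact ⟨w, fun _ => ⟨fun hc => absurd hc h, hw⟩⟩
      · exact ⟨v0, fun hc => absurd hc hS⟩
  choose f hf using hex
  set P : Finset (Finset V) := X.powerset.filter Finset.Nonempty with hPdef
  have hPmem : ∀ S ∈ P, S ⊆ X ∧ S.Nonempty := by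
    intro S hS
    simpa [hPdef, Finset.mem_filter, Finset.mem_powerset] using hS
  have hsubX : ∀ S ∈ P, (S : Set V) ⊆ X := by
    intro S hS
    exact_mod_cast Finset.coe_subset.mpr (hPmem S hS).1
  have htrace : ∀ S ∈ P,
      {y ∈ (X : Set V) | y = f S ∨ G.Adj (f S) y} = (S : Set V) :=
    fun S hS => (hf S (hsubX S hS)).2
  have hpref : ∀ S ∈ P,
      (∃ x ∈ X, {y ∈ (X : Set V) | y = x ∨ G.Adj x y} = (S : Set V)) → f S ∈ X :=
    fun S hS => (hf S (hsubX S hS)).1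
  have hinj : ∀ S ∈ P, ∀ T ∈ P, f S = f T → S = T := by
    intro S hS T hT hfe
    have : (S : Set V) = (T : Set V) := by
      rw [← htrace S hS, ← htrace T hT, hfe]
    exact_mod_cast this
  -- membership criterion for S via its witness
  have hmemS : ∀ S ∈ P, ∀ y ∈ X, (y ∈ S ↔ (y = f S ∨ G.Adj (f S) y)) := by
    intro S hS y hy
    have := Set.ext_iff.mp (htrace S hS) y
    simp only [Set.mem_setOf_eq, Set.mem_sep_iff, Finset.mem_coe, Finset.coe_mem] at this
    constructor
    · intro h
      exact (this.mpr h).2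
    · intro h
      exact this.mp ⟨hy, h⟩
  have hsingP : ∀ x ∈ X, ({x} : Finset V) ∈ P := by
    intro x hx
    simp [hPdef, Finset.mem_filter, Finset.mem_powerset, Finset.singleton_subset_iff, hx]
  set Y : Finset V := P.image f with hYdef
  refine ⟨X ∪ Y, X ∪ X.image (fun x => f {x}), ?_, ?_, ?_, ?_, ?_⟩
  · -- C ⊆ W
    apply Finset.union_subset (Finset.subset_union_left)
    intro c hc
    obtain ⟨x, hx, rfl⟩ := Finset.mem_image.mp hc
    exact Finset.mem_union_right _ (Finset.mem_image_of_mem f (hsingP x hx))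
  · -- card W
    have hYcard : Y.card = P.card := by
      apply Finset.card_image_of_injOn
      intro S hS T hT hfe
      exact hinj S hS T hT hfe
    have hPcard : P.card = 2 ^ k - 1 := by
      have hPe : P = X.powerset.erase ∅ := by
        ext S
        simp [hPdef, Finset.mem_filter, Finset.mem_erase,
          Finset.nonempty_iff_ne_empty, and_comm]
      rw [hPe, Finset.card_erase_of_mem (Finset.empty_mem_powerset X),
        Finset.card_powerset, hX]
    calc 2 ^ k - 1 = Y.card := by rw [hYcard, hPcard]
      _ ≤ (X ∪ Y).card := Finset.card_le_card Finset.subset_union_right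
  · -- card C
    calc (X ∪ X.image (fun x => f {x})).card
        ≤ X.card + (X.image (fun x => f {x})).card := Finset.card_union_le _ _
      _ ≤ k + k := by
          refine Nat.add_le_add hX.le ?_
          exact le_trans (Finset.card_image_le) hX.le
      _ = 2 * k := by ring
  · -- domination
    intro v hv
    rcases Finset.mem_union.mp hv with hvX | hvY
    · exact ⟨v, Finset.mem_union_left _ hvX, Or.inl rfl⟩
    · obtain ⟨S, hS, rfl⟩ := Finset.mem_image.mp hvY
      obtain ⟨x, hx⟩ := (hPmem S hS).2
      refine ⟨x, Finset.mem_union_left _ ((hPmem S hS).1 hx), ?_⟩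
      exact (hmemS S hS x ((hPmem S hS).1 hx)).mp hx
  · -- identification
    intro u hu v hv htr
    have htr' : ∀ c : V, c ∈ X ∪ X.image (fun x => f {x}) →
        ((c = u ∨ G.Adj u c) ↔ (c = v ∨ G.Adj v c)) := by
      intro c hc
      have := Set.ext_iff.mp htr c
      simp only [Set.mem_setOf_eq] at this
      constructor
      · intro h; exact (this.mp ⟨hc, h⟩).2
      · intro h; exact (this.mpr ⟨hc, h⟩).2
    have key : ∀ y ∈ X, ((y = u ∨ G.Adj u y) ↔ (y = v ∨ G.Adj v y)) := by
      intro y hy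
      exact htr' y (Finset.mem_union_left _ hy)
    -- helper: if u ∈ X then u = v
    have distX : ∀ a ∈ X, ∀ b ∈ X ∪ Y,
        (∀ c : V, c ∈ X ∪ X.image (fun x => f {x}) →
          ((c = a ∨ G.Adj a c) ↔ (c = b ∨ G.Adj b c))) → a = b := by
      intro a ha b hb habc
      have hsa : ({a} : Finset V) ∈ P := hsingP a ha
      set c := f ({a} : Finset V) with hcdef
      have hcC : c ∈ X ∪ X.image (fun x => f {x}) :=
        Finset.mem_union_right _ (Finset.mem_image_of_mem _ ha)
      have hca : (c = a ∨ G.Adj a c) := by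
        rcases (hmemS _ hsa a ha).mp (Finset.mem_singleton_self a) with h | h
        · exact Or.inl h.symm
        · exact Or.inr h.symm
      have hcb : (c = b ∨ G.Adj b c) := (habc c hcC).mp hca
      by_cases hbX : b ∈ X
      · -- b ∈ X: b ∈ trace of c on X which is {a}
        have : b ∈ ({a} : Finset V) := by
          apply (hmemS _ hsa b hbX).mpr
          rcases hcb with h | h
          · exact Or.inl h.symm
          · exact Or.inr h.symm
        exact (Finset.mem_singleton.mp this).symm
      · -- b is a witness not in X: contradiction with preference
        exfalso
        rcases Finset.mem_union.mp hb with h | hbY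
        · exact hbX h
        obtain ⟨T, hT, rfl⟩ := Finset.mem_image.mp hbY
        apply hbX
        apply hpref T hT
        refine ⟨a, ha, ?_⟩
        ext y
        simp only [Set.mem_sep_iff, Finset.mem_coe]
        constructor
        · rintro ⟨hy, h⟩
          exact (hmemS T hT y hy).mpr ((habc y (Finset.mem_union_left _ hy)).mp h)
        · intro hy
          have hyX : y ∈ X := (hPmem T hT).1 hy
          exact ⟨hyX, (habc y (Finset.mem_union_left _ hyX)).mpr
            ((hmemS T hT y hyX).mp hy)⟩
    by_cases huX : u ∈ X
    · exact distX u huX v hv htr'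
    · by_cases hvX : v ∈ X
      · exact (distX v hvX u hu (fun c hc => (htr' c hc).symm)).symm
      · -- both are witnesses not in X
        rcases Finset.mem_union.mp hu with h | huY
        · exact absurd h huX
        rcases Finset.mem_union.mp hv with h | hvY
        · exact absurd h hvX
        obtain ⟨S, hS, rfl⟩ := Finset.mem_image.mp huY
        obtain ⟨T, hT, rfl⟩ := Finset.mem_image.mp hvY
        have : S = T := by
          have hST : (S : Set V) = (T : Set V) := by
            rw [← htrace S hS, ← htrace T hT]
            ext y
            simp only [Set.mem_sep_iff, Finset.mem_coe]
            constructor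
            · rintro ⟨hy, h⟩
              exact ⟨hy, (key y hy).mp h⟩
            · rintro ⟨hy, h⟩
              exact ⟨hy, (key y hy).mpr h⟩
          exact_mod_cast hST
        rw [this]
end

section
/- Let $G = (X \cup Y, E)$ be the bipartite graph where $|Y| = n$, $X$ has one vertex $x_{uv}$ for each unordered pair $\{u,v\}$ of distinct vertices of $Y$, and $x_{uv}$ is adjacent exactly to $u$ and $v$. Then $G$ is $C_4$-free and $Y$ is an identifying code of $G$, so $G$ has $n + \binom{n}{2}$ vertices and an identifying code of size $n$. -/
/-- The bipartite graph with one side `Y = ι` and the other side consisting of one vertex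
for each unordered pair of distinct elements of `ι`, each pair-vertex adjacent exactly
to the two elements of its pair. -/
def pairGraph (ι : Type*) : SimpleGraph (ι ⊕ {p : Sym2 ι // ¬ p.IsDiag}) where
  Adj x y :=
    match x, y with
    | Sum.inl u, Sum.inr p => u ∈ p.val
    | Sum.inr p, Sum.inl u => u ∈ p.val
    | _, _ => False
  symm := ⟨by rintro (u | p) (v | q) h <;> first | exact h.elim | exact h⟩
  loopless := ⟨by rintro (u | p) h <;> exact h⟩

namespace pairGraph

variable {ι : Type*}

@[simp]
lemma adj_inl_inr {u : ι} {p : {p : Sym2 ι // ¬ p.IsDiag}} :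
    (pairGraph ι).Adj (.inl u) (.inr p) ↔ u ∈ p.val := Iff.rfl

@[simp]
lemma adj_inr_inl {u : ι} {p : {p : Sym2 ι // ¬ p.IsDiag}} :
    (pairGraph ι).Adj (.inr p) (.inl u) ↔ u ∈ p.val := Iff.rfl

@[simp]
lemma not_adj_inl_inl {u v : ι} : ¬ (pairGraph ι).Adj (.inl u) (.inl v) := id

@[simp]
lemma not_adj_inr_inr {p q : {p : Sym2 ι // ¬ p.IsDiag}} :
    ¬ (pairGraph ι).Adj (.inr p) (.inr q) := id

lemma pair_eq_of_mem {u v : ι} (huv : u ≠ v) {p q : {p : Sym2 ι // ¬ p.IsDiag}}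
    (hup : u ∈ p.val) (hvp : v ∈ p.val) (huq : u ∈ q.val) (hvq : v ∈ q.val) : p = q :=
  Subtype.ext <| ((Sym2.mem_and_mem_iff huv).mp ⟨hup, hvp⟩).trans
    ((Sym2.mem_and_mem_iff huv).mp ⟨huq, hvq⟩).symm

lemma eq_of_adj_of_adj {a c b d : ι ⊕ {p : Sym2 ι // ¬ p.IsDiag}} (hac : a ≠ c)
    (hab : (pairGraph ι).Adj a b) (hcb : (pairGraph ι).Adj c b)
    (had : (pairGraph ι).Adj a d) (hcd : (pairGraph ι).Adj c d) : b = d := by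
  rcases a with u | p <;> rcases c with v | q <;> rcases b with x | r <;>
    rcases d with y | s <;> simp only [adj_inl_inr, adj_inr_inl, not_adj_inl_inl,
      not_adj_inr_inr] at hab hcb had hcd
  · exact congrArg Sum.inr (pair_eq_of_mem (fun h => hac (congrArg _ h)) hab hcb had hcd)
  · by_contra hxy
    exact hac (congrArg Sum.inr
      (pair_eq_of_mem (fun h => hxy (congrArg _ h)) hab had hcb hcd))

/-- The trace `N[v] ∩ Y` of the closed neighbourhood of `v` on the code `Y`. -/
def codeTrace (v : ι ⊕ {p : Sym2 ι // ¬ p.IsDiag}) : Set ι :=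
  {y | Sum.inl y = v ∨ (pairGraph ι).Adj v (Sum.inl y)}

lemma codeTrace_inl (u : ι) : codeTrace (.inl u) = {u} := by
  ext y
  simp [codeTrace]

lemma codeTrace_inr (p : {p : Sym2 ι // ¬ p.IsDiag}) : codeTrace (.inr p) = {y | y ∈ p.val} := by
  ext y
  simp [codeTrace]

lemma codeTrace_nonempty (v : ι ⊕ {p : Sym2 ι // ¬ p.IsDiag}) : (codeTrace v).Nonempty := by
  rcases v with u | p
  · exact codeTrace_inl u ▸ Set.singleton_nonempty u
  · exact codeTrace_inr p ▸ ⟨_, p.val.out_fst_mem⟩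

/-- A pair-vertex sees two distinct points of `Y`, a point of `Y` only itself. -/
lemma codeTrace_inl_ne_inr (u : ι) (p : {p : Sym2 ι // ¬ p.IsDiag}) :
    codeTrace (.inl u) ≠ codeTrace (.inr p) := by
  rw [codeTrace_inl, codeTrace_inr]
  intro h
  have hu : u ∈ p.val := Set.ext_iff.mp h u |>.mp rfl
  exact Sym2.other_ne p.property hu (Set.ext_iff.mp h _ |>.mpr (Sym2.other_mem hu))

lemma codeTrace_injective : Function.Injective (codeTrace (ι := ι)) := by
  rintro (u | p) (v | q) h
  · rw [codeTrace_inl, codeTrace_inl, Set.singleton_eq_singleton_iff] at h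
    rw [h]
  · exact absurd h (codeTrace_inl_ne_inr u q)
  · exact absurd h.symm (codeTrace_inl_ne_inr v p)
  · rw [codeTrace_inr, codeTrace_inr] at h
    exact congrArg Sum.inr (Subtype.ext (Sym2.ext fun y => Set.ext_iff.mp h y))

end pairGraph

/-- The pair graph on `n` points is `C₄`-free, has `n + n.choose 2` vertices, and
`Y` (the copy of `ι`) is an identifying code of it (of size `n`). -/
theorem stmt7 {ι : Type*} [Fintype ι] [DecidableEq ι] :
    (¬ ∃ a b c d : ι ⊕ {p : Sym2 ι // ¬ p.IsDiag},
        a ≠ b ∧ a ≠ c ∧ a ≠ d ∧ b ≠ c ∧ b ≠ d ∧ c ≠ d ∧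
        (pairGraph ι).Adj a b ∧ (pairGraph ι).Adj b c ∧
        (pairGraph ι).Adj c d ∧ (pairGraph ι).Adj d a) ∧
    (∀ v : ι ⊕ {p : Sym2 ι // ¬ p.IsDiag},
      ∃ y : ι, Sum.inl y = v ∨ (pairGraph ι).Adj v (Sum.inl y)) ∧
    (∀ u v : ι ⊕ {p : Sym2 ι // ¬ p.IsDiag},
      {y : ι | Sum.inl y = u ∨ (pairGraph ι).Adj u (Sum.inl y)} =
        {y : ι | Sum.inl y = v ∨ (pairGraph ι).Adj v (Sum.inl y)} → u = v) ∧
    Fintype.card (ι ⊕ {p : Sym2 ι // ¬ p.IsDiag}) =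
      Fintype.card ι + (Fintype.card ι).choose 2 := by
  refine ⟨?_, pairGraph.codeTrace_nonempty, fun _ _ h => pairGraph.codeTrace_injective h, ?_⟩
  · rintro ⟨a, b, c, d, -, hac, -, -, hbd, -, hab, hbc, hcd, hda⟩
    exact hbd (pairGraph.eq_of_adj_of_adj hac hab hbc.symm hda.symm hcd)
  · rw [Fintype.card_sum, Sym2.card_subtype_not_diag]
end

section
/- For all sufficiently large $n$, there exists a bipartite graph $G_0 = (A \cup B, E_0)$ with $|A| = |B| = n$ such that there are no subsets $A' \subseteq A$, $B' \subseteq B$ with $|A'| = |B'| = \lfloor 2\log_2 n \rfloor$ inducing either a complete bipartite graph or an empty bipartite graph between $A'$ and $B'$. -/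
/-!
Erdős-style counting: colour every pair of `A × B` with one of `r` colours. A fixed `k × k`
rectangle in a fixed colour is monochromatic for a fraction `r ^ -(k * k)` of the colourings,
so if `r * (|A| choose k) * (|B| choose k) < r ^ (k * k)` some colouring has no monochromatic
rectangle at all. For two colours, `|A| = |B| = n` and `k = ⌊2 log₂ n⌋ = Nat.log 2 (n ^ 2)`,
the bound `(n choose k) ≤ n ^ k / k! < 2 ^ (k (k + 1) / 2) / 2 ^ (k - 1)` gives this once `k ≥ 3`.
-/

open Finset

theorem card_filter_forall_mem_eq_mul_pow_card {ι γ : Type*} [Fintype ι] [DecidableEq ι]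
    [Fintype γ] [DecidableEq γ] (S : Finset ι) (c : γ) :
    #{g : ι → γ | ∀ i ∈ S, g i = c} * Fintype.card γ ^ #S = Fintype.card γ ^ Fintype.card ι := by
  have hpi : ({g : ι → γ | ∀ i ∈ S, g i = c} : Finset (ι → γ)) =
      Fintype.piFinset fun i => if i ∈ S then {c} else univ := by
    ext g
    simp only [mem_filter, mem_univ, true_and, Fintype.mem_piFinset]
    refine forall_congr' fun i => ?_
    split_ifs with hi <;> simp [hi]
  simp only [hpi, Fintype.card_piFinset, apply_ite card, card_singleton, card_univ, prod_ite,
    prod_const_one, prod_const, one_mul, ← pow_add]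
  rw [filter_not, ← compl_eq_univ_sdiff, filter_mem_eq_inter, univ_inter, card_compl_add_card]

theorem exists_coloring_forall_not_monochromatic {α β γ : Type*} [Fintype α] [DecidableEq α]
    [Fintype β] [DecidableEq β] [Fintype γ] [DecidableEq γ] [Nonempty γ] (k : ℕ)
    (h : Fintype.card γ * (Fintype.card α).choose k * (Fintype.card β).choose k <
      Fintype.card γ ^ (k * k)) :
    ∃ g : α × β → γ, ∀ (s : Finset α) (t : Finset β), #s = k → #t = k →
      ∀ c, ¬ ∀ a ∈ s, ∀ b ∈ t, g (a, b) = c := by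
  by_contra! hbad
  set r := Fintype.card γ
  set N := Fintype.card (α × β)
  set rects := powersetCard k (univ : Finset α) ×ˢ powersetCard k (univ : Finset β) ×ˢ
    (univ : Finset γ)
  have hcover : (univ : Finset (α × β → γ)) ⊆
      rects.biUnion fun x => {g | ∀ i ∈ x.1 ×ˢ x.2.1, g i = x.2.2} := by
    intro g _
    obtain ⟨s, t, hs, ht, c, hc⟩ := hbad g
    simp only [mem_biUnion, mem_filter, mem_univ, true_and, rects, mem_product,
      mem_powersetCard, subset_univ, Prod.exists]
    exact ⟨s, t, c, ⟨hs, ht, trivial⟩, fun i hi => hc _ hi.1 _ hi.2⟩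
  have hcount : r ^ (k * k) * r ^ N ≤ r * (Fintype.card α).choose k *
      (Fintype.card β).choose k * r ^ N := by
    calc r ^ (k * k) * r ^ N = #(univ : Finset (α × β → γ)) * r ^ (k * k) := by
          simp [r, N, mul_comm]
      _ ≤ (∑ x ∈ rects, #{g : α × β → γ | ∀ i ∈ x.1 ×ˢ x.2.1, g i = x.2.2}) * r ^ (k * k) :=
          Nat.mul_le_mul_right _ ((card_le_card hcover).trans card_biUnion_le)
      _ = ∑ x ∈ rects, r ^ N := by
          rw [sum_mul]
          refine sum_congr rfl fun x hx => ?_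
          simp only [rects, mem_product, mem_powersetCard] at hx
          rw [show k * k = #(x.1 ×ˢ x.2.1) by rw [card_product, hx.1.2, hx.2.1.2]]
          exact card_filter_forall_mem_eq_mul_pow_card _ _
      _ = r * (Fintype.card α).choose k * (Fintype.card β).choose k * r ^ N := by
          simp only [rects, sum_const, card_product, card_powersetCard, card_univ, smul_eq_mul]
          ring
  have hpos : 0 < r ^ N := pow_pos Fintype.card_pos _
  exact lt_irrefl _ (hcount.trans_lt (Nat.mul_lt_mul_of_pos_right h hpos))

theorem two_mul_choose_mul_choose_lt_two_pow {n k : ℕ} (hk : 3 ≤ k) (hn : n ^ 2 < 2 ^ (k + 1)) :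
    2 * n.choose k * n.choose k < 2 ^ (k * k) := by
  have hfact : 2 ^ (k - 1) ≤ k.factorial := by
    simpa [Nat.add_sub_cancel' (by omega : 1 ≤ k)] using
      Nat.factorial_mul_pow_le_factorial (m := 1) (n := k - 1)
  have hchoose : n.choose k * k.factorial ≤ n ^ k := by
    rw [mul_comm, ← Nat.descFactorial_eq_factorial_mul_choose]
    exact Nat.descFactorial_le_pow n k
  refine Nat.lt_of_mul_lt_mul_right (a := 2 ^ (k - 1) * 2 ^ (k - 1)) ?_
  calc 2 * n.choose k * n.choose k * (2 ^ (k - 1) * 2 ^ (k - 1))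
      ≤ 2 * (n.choose k * k.factorial) * (n.choose k * k.factorial) := by
        rw [show 2 * n.choose k * n.choose k * (2 ^ (k - 1) * 2 ^ (k - 1)) =
          2 * (n.choose k * 2 ^ (k - 1)) * (n.choose k * 2 ^ (k - 1)) by ring]
        gcongr
    _ ≤ 2 * (n ^ 2) ^ k := by
        rw [← pow_mul, mul_comm 2 k, pow_mul, sq, mul_assoc]
        gcongr
    _ < 2 * (2 ^ (k + 1)) ^ k := by gcongr
    _ ≤ 2 ^ (k * k) * (2 ^ (k - 1) * 2 ^ (k - 1)) := by
        rw [← pow_mul, ← pow_succ', ← pow_add, ← pow_add]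
        exact Nat.pow_le_pow_right two_pos (by zify [show 1 ≤ k by omega]; nlinarith)

theorem natFloor_mul_logb_natCast (b n m : ℕ) : ⌊m * Real.logb b n⌋₊ = Nat.log b (n ^ m) := by
  rw [← Real.logb_pow, ← Nat.cast_pow, Real.natFloor_logb_natCast]

/-- For all sufficiently large `n`, there is a bipartite graph with parts of size `n`
(given by an adjacency relation `E : Fin n → Fin n → Prop`) containing no complete and
no empty bipartite subgraph with both sides of size `⌊2 log₂ n⌋`. -/
theorem stmt9 : ∃ N : ℕ, ∀ n : ℕ, N ≤ n →
    ∃ E : Fin n → Fin n → Prop,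
      ∀ A' B' : Finset (Fin n),
        A'.card = ⌊2 * Real.logb 2 n⌋₊ → B'.card = ⌊2 * Real.logb 2 n⌋₊ →
        ¬ ((∀ a ∈ A', ∀ b ∈ B', E a b) ∨ (∀ a ∈ A', ∀ b ∈ B', ¬ E a b)) := by
  refine ⟨3, fun n hn => ?_⟩
  have hk : ⌊2 * Real.logb 2 n⌋₊ = Nat.log 2 (n ^ 2) := by
    simpa using natFloor_mul_logb_natCast 2 n 2
  have hk3 : 3 ≤ Nat.log 2 (n ^ 2) := Nat.le_log_of_pow_le one_lt_two (by nlinarith)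
  have hsq : n ^ 2 < 2 ^ (Nat.log 2 (n ^ 2) + 1) := Nat.lt_pow_succ_log_self one_lt_two _
  obtain ⟨g, hg⟩ := exists_coloring_forall_not_monochromatic (α := Fin n) (β := Fin n)
    (γ := Bool) _ (by simpa using two_mul_choose_mul_choose_lt_two_pow hk3 hsq)
  refine ⟨fun a b => g (a, b), fun A' B' hA hB hmono => ?_⟩
  rw [hk] at hA hB
  rcases hmono with hall | hnone
  · exact hg A' B' hA hB true hall
  · exact hg A' B' hA hB false fun a ha b hb => by simpa using hnone a ha b hb
end

section
/- Let $s_1 < s_2 < \dots < s_\alpha$ be pairwise disjoint intervals on the real line ordered by right endpoint, within a family of intervals forming an interval graph. Then every interval $i$ of the family belongs to the symmetric difference $N[s_j] \triangle N[s_{j+1}]$ for at most two distinct indices $j \in \{1, \dots, \alpha - 1\}$. -/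
/-- Let `s 0, s 1, ..., s (α-1)` be pairwise disjoint intervals ordered by right endpoint
(in fact, each ending before the next begins), inside a family of closed intervals
`[l i, r i]`. Then any interval `i` of the family belongs to the symmetric difference
`N[s j] △ N[s (j+1)]` (closed neighbourhoods in the intersection graph) for at most
two indices `j`. -/
theorem stmt12 {ι : Type*} (l r : ι → ℝ) (hlr : ∀ i, l i ≤ r i)
    (α : ℕ) (s : ℕ → ι)
    (hord : ∀ j k : ℕ, j < k → k < α → r (s j) < l (s k))
    (i : ι) :
    Set.ncard {j : ℕ | j + 1 < α ∧
      ¬ ((l i ≤ r (s j) ∧ l (s j) ≤ r i) ↔ (l i ≤ r (s (j + 1)) ∧ l (s (j + 1)) ≤ r i))}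
      ≤ 2 := by
  classical
  set A : ℕ → Prop := fun j => l i ≤ r (s j) with hA
  set B : ℕ → Prop := fun j => l (s j) ≤ r i with hB
  have hAmono : ∀ j k, j < k → k < α → A j → A k := by
    intro j k hjk hk h
    exact h.trans ((hord j k hjk hk).le.trans (hlr _))
  have hBmono : ∀ j k, j < k → k < α → B k → B j := by
    intro j k hjk hk h
    exact ((hlr _).trans (hord j k hjk hk).le).trans h
  set SA : Set ℕ := {j | j + 1 < α ∧ ¬ A j ∧ A (j + 1)} with hSA
  set SB : Set ℕ := {j | j + 1 < α ∧ B j ∧ ¬ B (j + 1)} with hSB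
  have hsub : {j : ℕ | j + 1 < α ∧
      ¬ ((l i ≤ r (s j) ∧ l (s j) ≤ r i) ↔ (l i ≤ r (s (j + 1)) ∧ l (s (j + 1)) ≤ r i))}
      ⊆ SA ∪ SB := by
    intro j hj
    obtain ⟨hjα, hne⟩ := hj
    have h1 : A j → A (j + 1) := hAmono j (j + 1) (Nat.lt_succ_self j) hjα
    have h2 : B (j + 1) → B j := hBmono j (j + 1) (Nat.lt_succ_self j) hjα
    have hne' : ¬ ((A j ∧ B j) ↔ (A (j + 1) ∧ B (j + 1))) := hne
    have : (¬ A j ∧ A (j + 1)) ∨ (B j ∧ ¬ B (j + 1)) := by tauto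
    rcases this with h | h
    · exact Or.inl ⟨hjα, h⟩
    · exact Or.inr ⟨hjα, h⟩
  have hSAsub : SA.Subsingleton := by
    intro j hj k hk
    by_contra hne
    rcases Nat.lt_or_ge j k with h | h
    · rcases Nat.lt_or_ge (j + 1) k with h' | h'
      · exact hk.2.1 (hAmono (j + 1) k h' (Nat.lt_of_succ_lt hk.1) hj.2.2)
      · have : j + 1 = k := le_antisymm h h'
        exact hk.2.1 (this ▸ hj.2.2)
    · have h : k < j := lt_of_le_of_ne h (fun e => hne e.symm)
      rcases Nat.lt_or_ge (k + 1) j with h' | h'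
      · exact hj.2.1 (hAmono (k + 1) j h' (Nat.lt_of_succ_lt hj.1) hk.2.2)
      · have : k + 1 = j := le_antisymm h h'
        exact hj.2.1 (this ▸ hk.2.2)
  have hSBsub : SB.Subsingleton := by
    intro j hj k hk
    by_contra hne
    rcases Nat.lt_or_ge j k with h | h
    · rcases Nat.lt_or_ge (j + 1) k with h' | h'
      · exact hj.2.2 (hBmono (j + 1) k h' (Nat.lt_of_succ_lt hk.1) hk.2.1)
      · have : j + 1 = k := le_antisymm h h'
        exact hj.2.2 (this ▸ hk.2.1)
    · have h : k < j := lt_of_le_of_ne h (fun e => hne e.symm)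
      rcases Nat.lt_or_ge (k + 1) j with h' | h'
      · exact hk.2.2 (hBmono (k + 1) j h' (Nat.lt_of_succ_lt hj.1) hj.2.1)
      · have : k + 1 = j := le_antisymm h h'
        exact hk.2.2 (this ▸ hj.2.1)
  have hfin : (SA ∪ SB).Finite := hSAsub.finite.union hSBsub.finite
  calc Set.ncard _ ≤ (SA ∪ SB).ncard := Set.ncard_le_ncard hsub hfin
    _ ≤ SA.ncard + SB.ncard := Set.ncard_union_le _ _
    _ ≤ 1 + 1 := Nat.add_le_add (((Set.ncard_le_one hSAsub.finite).2 hSAsub))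
        (((Set.ncard_le_one hSBsub.finite).2 hSBsub))
    _ = 2 := rfl
end

section
/- Let $j$ and $k$ be two intersecting intervals on the real line with distinct endpoint data. Then the symmetric difference $N[j] \triangle N[k]$ (closed neighbourhoods in the interval graph) is the disjoint union of $L_{jk}$, the set of intervals whose right endpoint lies strictly between the left endpoints of $j$ and $k$, and $R_{jk}$, the set of intervals whose left endpoint lies strictly between the right endpoints of $j$ and $k$. -/
/-- For two intersecting intervals `j`, `k` in a family of closed intervals with distinct
endpoint data (in general position), the symmetric difference `N[j] △ N[k]` of their
closed neighbourhoods in the interval graph is the disjoint union of `L`, the intervals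
whose right endpoint lies strictly between the left endpoints of `j` and `k`, and `R`,
the intervals whose left endpoint lies strictly between the right endpoints of `j`
and `k`. -/
theorem stmt13 {ι : Type*} (l r : ι → ℝ) (hlr : ∀ i, l i ≤ r i)
    (j k : ι) (hjk : l j ≤ r k ∧ l k ≤ r j)
    (hlne : l j ≠ l k) (hrne : r j ≠ r k)
    (hgen : ∀ w : ι, w ≠ j → w ≠ k →
      r w ≠ l j ∧ r w ≠ l k ∧ l w ≠ r j ∧ l w ≠ r k) :
    {w : ι | ¬ ((l w ≤ r j ∧ l j ≤ r w) ↔ (l w ≤ r k ∧ l k ≤ r w))} =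
      {w : ι | min (l j) (l k) < r w ∧ r w < max (l j) (l k)} ∪
        {w : ι | min (r j) (r k) < l w ∧ l w < max (r j) (r k)} ∧
    Disjoint {w : ι | min (l j) (l k) < r w ∧ r w < max (l j) (l k)}
      {w : ι | min (r j) (r k) < l w ∧ l w < max (r j) (r k)} := by
  obtain ⟨hjk1, hjk2⟩ := hjk
  constructor
  · ext w
    simp only [Set.mem_setOf_eq, Set.mem_union]
    rcases eq_or_ne w j with heq | hwj
    · rw [heq]
      constructor
      · intro h
        exact (h (iff_of_true ⟨hlr j, hlr j⟩ ⟨hjk1, hjk2⟩)).elim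
      · rintro (⟨h5, h6⟩ | ⟨h5, h6⟩) h'
        · exact absurd h6 (not_lt.2 (max_le (hlr j) hjk2))
        · exact absurd h5 (not_lt.2 (le_min (hlr j) hjk1))
    rcases eq_or_ne w k with heq | hwk
    · rw [heq]
      constructor
      · intro h
        exact (h (iff_of_true ⟨hjk2, hjk1⟩ ⟨hlr k, hlr k⟩)).elim
      · rintro (⟨h5, h6⟩ | ⟨h5, h6⟩) h'
        · exact absurd h6 (not_lt.2 (max_le hjk1 (hlr k)))
        · exact absurd h5 (not_lt.2 (le_min hjk2 (hlr k)))
    obtain ⟨h1, h2, h3, h4⟩ := hgen w hwj hwk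
    have hw := hlr w
    rcases le_total (l j) (l k) with hl | hl <;>
    rcases le_total (r j) (r k) with hr | hr <;>
    (first
      | rw [min_eq_left hl, max_eq_right hl]
      | rw [min_eq_right hl, max_eq_left hl]) <;>
    (first
      | rw [min_eq_left hr, max_eq_right hr]
      | rw [min_eq_right hr, max_eq_left hr]) <;>
    constructor <;>
    first
      | (rintro (⟨h5, h6⟩ | ⟨h5, h6⟩) h' <;>
         first
           | (have := h'.mp ⟨by linarith, by linarith⟩; linarith [this.1, this.2])
           | (have := h'.mpr ⟨by linarith, by linarith⟩; linarith [this.1, this.2])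
           | linarith)
      | (intro h
         rcases lt_or_gt_of_ne h1 with p1 | p1 <;>
         rcases lt_or_gt_of_ne h2 with p2 | p2 <;>
         rcases lt_or_gt_of_ne h3 with p3 | p3 <;>
         rcases lt_or_gt_of_ne h4 with p4 | p4 <;>
         first
           | linarith
           | exact absurd (iff_of_true ⟨by linarith, by linarith⟩ ⟨by linarith, by linarith⟩) h
           | exact absurd (iff_of_false (by rintro ⟨a, b⟩; linarith)
               (by rintro ⟨a, b⟩; linarith)) h
           | exact Or.inl ⟨by linarith, by linarith⟩
           | exact Or.inr ⟨by linarith, by linarith⟩)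
  · rw [Set.disjoint_left]
    rintro w ⟨h5, h6⟩ ⟨h7, h8⟩
    have hmm : max (l j) (l k) ≤ min (r j) (r k) :=
      max_le (le_min (hlr j) hjk1) (le_min hjk2 (hlr k))
    linarith [hlr w]
end

section
/- A 0/1 matrix in which the ones in every row appear in consecutive columns (the consecutive-ones property on rows) is totally unimodular. -/
open Matrix in

/-- A square integer matrix in which every row has entries in {-1,0,1}, at most one `1`,
and at most one `-1`, has determinant in {-1,0,1}. -/
lemma incidence_det : ∀ (k : ℕ) (W : Matrix (Fin k) (Fin k) ℤ),
    (∀ i j, W i j = -1 ∨ W i j = 0 ∨ W i j = 1) →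
    (∀ i j₁ j₂, W i j₁ = 1 → W i j₂ = 1 → j₁ = j₂) →
    (∀ i j₁ j₂, W i j₁ = -1 → W i j₂ = -1 → j₁ = j₂) →
    W.det = -1 ∨ W.det = 0 ∨ W.det = 1 := by
  intro k
  induction k with
  | zero => intro W _ _ _; right; right; exact Matrix.det_fin_zero
  | succ k ih =>
    intro W hval hone hmone
    by_cases hrow : ∀ i, (∃ j, W i j = 1) ∧ (∃ j, W i j = -1)
    · -- every row has both a +1 and a -1, so every row sums to zero
      right; left
      have hsum : ∀ i, ∑ j, W i j = 0 := by
        intro i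
        obtain ⟨⟨a, ha⟩, ⟨b, hb⟩⟩ := hrow i
        have hab : a ≠ b := by intro h; rw [h, hb] at ha; omega
        have : ∑ j, W i j = ∑ j ∈ ({a, b} : Finset (Fin (k+1))), W i j := by
          refine (Finset.sum_subset (Finset.subset_univ _) ?_).symm
          intro j _ hj
          simp only [Finset.mem_insert, Finset.mem_singleton, not_or] at hj
          rcases hval i j with h | h | h
          · exact absurd (hmone i j b h hb) hj.2
          · exact h
          · exact absurd (hone i j a h ha) hj.1
        rw [this, Finset.sum_pair hab, ha, hb]; ring
      rw [← Matrix.exists_mulVec_eq_zero_iff]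
      refine ⟨fun _ => 1, ?_, ?_⟩
      · intro h
        have := congrFun h 0
        simp at this
      · funext i
        simp [Matrix.mulVec, dotProduct, hsum i]
    · push_neg at hrow
      obtain ⟨i, hi⟩ := hrow
      by_cases hz : ∀ j, W i j = 0
      · right; left
        exact Matrix.det_eq_zero_of_row_eq_zero i hz
      · push_neg at hz
        obtain ⟨j₀, hj₀⟩ := hz
        -- all nonzero entries in row i have the same sign, hence j₀ is the unique nonzero
        have hi' : (∀ j, W i j ≠ 1) ∨ (∀ j, W i j ≠ -1) := by
          by_cases hex : ∃ j, W i j = 1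
          · exact Or.inr (hi hex)
          · exact Or.inl (fun j h => hex ⟨j, h⟩)
        have huniq : ∀ j, j ≠ j₀ → W i j = 0 := by
          intro j hj
          by_contra hnz
          rcases hi' with hno1 | hnom1
          · have hjm : W i j = -1 := by
              rcases hval i j with h|h|h
              exacts [h, absurd h hnz, absurd h (hno1 j)]
            have hj0m : W i j₀ = -1 := by
              rcases hval i j₀ with h|h|h
              exacts [h, absurd h hj₀, absurd h (hno1 j₀)]
            exact hj (hmone i j j₀ hjm hj0m)
          · have hjm : W i j = 1 := by
              rcases hval i j with h|h|h
              exacts [absurd h (hnom1 j), absurd h hnz, h]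
            have hj0m : W i j₀ = 1 := by
              rcases hval i j₀ with h|h|h
              exacts [absurd h (hnom1 j₀), absurd h hj₀, h]
            exact hj (hone i j j₀ hjm hj0m)
        -- cofactor expansion along row i
        have hexp : W.det = (-1) ^ (i + j₀ : ℕ) * W i j₀ *
            (W.submatrix i.succAbove j₀.succAbove).det := by
          rw [Matrix.det_succ_row W i]
          rw [Finset.sum_eq_single j₀]
          · intro j _ hj
            rw [huniq j hj]; ring
          · intro h; exact absurd (Finset.mem_univ j₀) h
        have hminor := ih (W.submatrix i.succAbove j₀.succAbove)
          (fun i' j' => hval _ _)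
          (fun i' j₁ j₂ h1 h2 => Fin.succAbove_right_injective (hone _ _ _ h1 h2))
          (fun i' j₁ j₂ h1 h2 => Fin.succAbove_right_injective (hmone _ _ _ h1 h2))
        have hsign : ((-1 : ℤ)) ^ (i + j₀ : ℕ) = 1 ∨ ((-1 : ℤ)) ^ (i + j₀ : ℕ) = -1 :=
          neg_one_pow_eq_or ℤ _
        have hw0 : W i j₀ = -1 ∨ W i j₀ = 1 := by
          rcases hval i j₀ with h|h|h
          · exact Or.inl h
          · exact absurd h hj₀
          · exact Or.inr h
        rw [hexp]
        rcases hsign with h1|h1 <;> rcases hw0 with h2|h2 <;> rcases hminor with h3|h3|h3 <;>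
          rw [h1, h2, h3] <;> norm_num

open Matrix in

lemma consec_det (k : ℕ) (A : Matrix (Fin k) (Fin k) ℤ)
    (h01 : ∀ i j, A i j = 0 ∨ A i j = 1)
    (hcons : ∀ i (c₁ c₂ c₃ : Fin k), c₁ ≤ c₂ → c₂ ≤ c₃ → A i c₁ = 1 → A i c₃ = 1 → A i c₂ = 1) :
    A.det = -1 ∨ A.det = 0 ∨ A.det = 1 := by
  classical
  set U : Matrix (Fin k) (Fin k) ℤ :=
    fun l j => (if l = j then 1 else 0) - (if (l : ℕ) + 1 = (j : ℕ) then 1 else 0) with hU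
  have hUtri : U.BlockTriangular id := by
    intro i j hij
    have hj : (j : ℕ) < (i : ℕ) := hij
    simp only [hU]
    rw [if_neg (show ¬ i = j from fun h => by subst h; omega),
      if_neg (show ¬ ((i : ℕ) + 1 = (j : ℕ)) from by omega)]
    ring
  have hUdet : U.det = 1 := by
    rw [Matrix.det_of_upperTriangular hUtri]
    apply Finset.prod_eq_one
    intro i _
    simp [hU]
  set pred : Fin k → Fin k :=
    fun j => ⟨(j : ℕ) - 1, Nat.lt_of_le_of_lt (Nat.sub_le _ _) j.isLt⟩ with hpred
  set W : Matrix (Fin k) (Fin k) ℤ := A * U with hWdef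
  have hW : ∀ i j, W i j = A i j - (if 0 < (j : ℕ) then A i (pred j) else 0) := by
    intro i j
    rw [hWdef, Matrix.mul_apply]
    simp only [hU, mul_sub, mul_ite, mul_one, mul_zero]
    rw [Finset.sum_sub_distrib, Finset.sum_ite_eq' Finset.univ j (A i),
      if_pos (Finset.mem_univ j)]
    congr 1
    by_cases hj : 0 < (j : ℕ)
    · rw [if_pos hj]
      rw [Finset.sum_eq_single (pred j)]
      · rw [if_pos (by simp [hpred] <;> omega)]
      · intro l _ hl
        rw [if_neg]
        intro hc
        exact hl (Fin.ext (by simp [hpred] <;> omega))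
      · intro h; exact absurd (Finset.mem_univ _) h
    · rw [if_neg hj]
      apply Finset.sum_eq_zero
      intro l _
      rw [if_neg (by omega)]
  have hdetAW : W.det = A.det := by
    rw [hWdef, Matrix.det_mul, hUdet, mul_one]
  -- facts extracted from W i j = 1 / = -1
  have hWone : ∀ i j, W i j = 1 → A i j = 1 ∧ (0 < (j : ℕ) → A i (pred j) = 0) := by
    intro i j h
    rw [hW] at h
    by_cases hj : 0 < (j : ℕ)
    · rw [if_pos hj] at h
      rcases h01 i j with h1 | h1 <;> rcases h01 i (pred j) with h2 | h2 <;>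
        first | (exact ⟨h1, fun _ => h2⟩) | omega
    · rw [if_neg hj] at h
      exact ⟨by omega, fun h' => absurd h' hj⟩
  have hWmone : ∀ i j, W i j = -1 → A i j = 0 ∧ 0 < (j : ℕ) ∧ A i (pred j) = 1 := by
    intro i j h
    rw [hW] at h
    by_cases hj : 0 < (j : ℕ)
    · rw [if_pos hj] at h
      rcases h01 i j with h1 | h1 <;> rcases h01 i (pred j) with h2 | h2 <;>
        first | (exact ⟨h1, hj, h2⟩) | omega
    · rw [if_neg hj] at h
      rcases h01 i j with h1 | h1 <;> omega
  rw [← hdetAW]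
  apply incidence_det k
  · intro i j
    rw [hW]
    by_cases hj : 0 < (j : ℕ)
    · rw [if_pos hj]
      rcases h01 i j with h1 | h1 <;> rcases h01 i (pred j) with h2 | h2 <;> omega
    · rw [if_neg hj]
      rcases h01 i j with h1 | h1 <;> omega
  · intro i j₁ j₂ h1 h2
    have key : ∀ j₁ j₂ : Fin k, j₁ < j₂ → W i j₁ = 1 → W i j₂ = 1 → False := by
      intro j₁ j₂ hlt h1 h2
      obtain ⟨ha1, _⟩ := hWone i j₁ h1
      obtain ⟨ha2, hb2⟩ := hWone i j₂ h2
      have hj2 : 0 < (j₂ : ℕ) := by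
        have : (j₁ : ℕ) < (j₂ : ℕ) := hlt
        omega
      have hmid : A i (pred j₂) = 1 := by
        apply hcons i j₁ (pred j₂) j₂
        · show (j₁ : ℕ) ≤ _
          have : (j₁ : ℕ) < (j₂ : ℕ) := hlt
          simp [hpred] <;> omega
        · show ((pred j₂ : Fin k) : ℕ) ≤ (j₂ : ℕ)
          simp [hpred] <;> omega
        · exact ha1
        · exact ha2
      rw [hb2 hj2] at hmid
      omega
    rcases lt_trichotomy j₁ j₂ with h | h | h
    · exact absurd (key j₁ j₂ h h1 h2) not_false
    · exact h
    · exact absurd (key j₂ j₁ h h2 h1) not_false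
  · intro i j₁ j₂ h1 h2
    have key : ∀ j₁ j₂ : Fin k, j₁ < j₂ → W i j₁ = -1 → W i j₂ = -1 → False := by
      intro j₁ j₂ hlt h1 h2
      obtain ⟨ha1, hj1, hb1⟩ := hWmone i j₁ h1
      obtain ⟨ha2, hj2, hb2⟩ := hWmone i j₂ h2
      have hltn : (j₁ : ℕ) < (j₂ : ℕ) := hlt
      have hmid : A i j₁ = 1 := by
        apply hcons i (pred j₁) j₁ (pred j₂)
        · show ((pred j₁ : Fin k) : ℕ) ≤ (j₁ : ℕ)
          simp [hpred] <;> omega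
        · show (j₁ : ℕ) ≤ _
          simp [hpred] <;> omega
        · exact hb1
        · exact hb2
      omega
    rcases lt_trichotomy j₁ j₂ with h | h | h
    · exact absurd (key j₁ j₂ h h1 h2) not_false
    · exact h
    · exact absurd (key j₂ j₁ h h2 h1) not_false

open Matrix in

/-- A 0/1 matrix with the consecutive-ones property on rows (ones in every row occupy
consecutive columns) is totally unimodular. -/
theorem stmt15 {m n : ℕ} (M : Matrix (Fin m) (Fin n) ℤ)
    (h01 : ∀ i j, M i j = 0 ∨ M i j = 1)
    (hconsec : ∀ (i : Fin m) (c₁ c₂ c₃ : Fin n), c₁ ≤ c₂ → c₂ ≤ c₃ →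
      M i c₁ = 1 → M i c₃ = 1 → M i c₂ = 1) :
    M.IsTotallyUnimodular := by
  intro k f g _ _
  set σ : Equiv.Perm (Fin k) := Tuple.sort g with hσ
  have hmono : Monotone (g ∘ σ) := Tuple.monotone_sort g
  set B : Matrix (Fin k) (Fin k) ℤ := M.submatrix f (g ∘ σ) with hB
  have hBdet : B.det = -1 ∨ B.det = 0 ∨ B.det = 1 := by
    apply consec_det
    · intro i j; exact h01 (f i) (g (σ j))
    · intro i c₁ c₂ c₃ h12 h23 hc1 hc3
      exact hconsec (f i) (g (σ c₁)) (g (σ c₂)) (g (σ c₃)) (hmono h12) (hmono h23) hc1 hc3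
  have hperm : B.det = (Equiv.Perm.sign σ : ℤ) * (M.submatrix f g).det := by
    have : B = (M.submatrix f g).submatrix id σ := by
      rw [Matrix.submatrix_submatrix, Function.comp_id, hB]
    rw [this, Matrix.det_permute']
    norm_cast
  have hsign : (Equiv.Perm.sign σ : ℤ) = 1 ∨ (Equiv.Perm.sign σ : ℤ) = -1 := by
    rcases Int.units_eq_one_or (Equiv.Perm.sign σ) with h | h <;> rw [h] <;> simp
  have hM : (M.submatrix f g).det = -1 ∨ (M.submatrix f g).det = 0 ∨
      (M.submatrix f g).det = 1 := by
    rcases hsign with h | h <;> rw [h] at hperm <;> rcases hBdet with h' | h' | h' <;> omega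
  rcases hM with h | h | h
  · exact ⟨-1, by rw [h]; simp⟩
  · exact ⟨0, by rw [h]; simp⟩
  · exact ⟨1, by rw [h]; simp⟩
end

section
/- Let $G$ be a graph containing a shattered set $S$ of size $k + \lceil \log_2(2k) \rceil$ (with respect to closed neighbourhoods), and let $H = (A \cup B, E_H)$ be any bipartite graph with $|B| \le |A| = k$. Then $G$ contains an induced subgraph on $|A| + |B|$ vertices whose bipartisation equals $H$: there is an injection of $A \cup B$ into $V(G)$ such that for $a \in A$, $b \in B$, the images are adjacent in $G$ iff $ab \in E_H$. -/
/-- If `G` contains a shattered set of size `k + ⌈log₂(2k)⌉`, then for any bipartite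
graph `H = (A ∪ B, E_H)` with `|B| ≤ |A| = k` there is an injection of `A ⊕ B` into
`V(G)` such that the bipartisation of the induced image is `H`: images of `a ∈ A` and
`b ∈ B` are adjacent in `G` iff `ab ∈ E_H`. -/
theorem stmt19 {V A B : Type*} [Fintype A] [Fintype B] (G : SimpleGraph V)
    (k : ℕ) (hA : Fintype.card A = k) (hB : Fintype.card B ≤ k)
    (HE : A → B → Prop)
    (S : Finset V) (hS : S.card = k + Nat.clog 2 (2 * k))
    (hsh : ∀ T' ⊆ (S : Set V), ∃ w : V, {x ∈ (S : Set V) | x = w ∨ G.Adj w x} = T') :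
    ∃ φ : A ⊕ B → V, Function.Injective φ ∧
      ∀ (a : A) (b : B), (G.Adj (φ (Sum.inl a)) (φ (Sum.inr b)) ↔ HE a b) := by
  classical
  rcases Nat.eq_zero_or_pos k with hk0 | hk
  · subst hk0
    haveI : IsEmpty A := Fintype.card_eq_zero_iff.mp hA
    haveI : IsEmpty B := Fintype.card_eq_zero_iff.mp (Nat.le_zero.mp hB)
    exact ⟨isEmptyElim, fun x => isEmptyElim x, fun a => isEmptyElim a⟩
  set c := Nat.clog 2 (2 * k) with hc
  have hkS : k ≤ S.card := by omega
  obtain ⟨A', hA'S, hA'card⟩ := Finset.exists_subset_card_eq hkS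
  set R := S \ A' with hRdef
  have hRS : R ⊆ S := Finset.sdiff_subset
  have hRcard : R.card = c := by
    rw [hRdef, Finset.card_sdiff_of_subset hA'S, hS, hA'card]; omega
  have h2k : 2 * k ≤ 2 ^ c := Nat.le_pow_clog one_lt_two _
  have hSne : S.Nonempty := Finset.card_pos.mp (by omega)
  haveI : Nonempty V := ⟨hSne.choose⟩
  have hcardA' : Fintype.card A = Fintype.card A' := by
    rw [hA, Fintype.card_coe, hA'card]
  let eA : A ≃ A' := Fintype.equivOfCardEq hcardA'
  -- traces
  let T : B → Finset V := fun b =>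
    (Finset.univ.filter fun a : A => HE a b).image fun a => (eA a : V)
  have hTsub : ∀ b, T b ⊆ A' := by
    intro b x hx
    simp only [T, Finset.mem_image] at hx
    obtain ⟨a, -, rfl⟩ := hx
    exact (eA a).2
  -- witness function
  have hw : ∀ F : Finset V, F ⊆ S →
      ∃ w : V, ∀ x : V, (x ∈ S ∧ (x = w ∨ G.Adj w x)) ↔ x ∈ F := by
    intro F hF
    obtain ⟨w, hweq⟩ := hsh (↑F) (by exact_mod_cast Finset.coe_subset.mpr hF)
    refine ⟨w, fun x => ?_⟩
    have := Set.ext_iff.mp hweq x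
    simpa using this
  let wit : Finset V → V := fun F =>
    if h : F ⊆ S then (hw F h).choose else Classical.arbitrary V
  have hwit : ∀ F : Finset V, F ⊆ S →
      ∀ x : V, (x ∈ S ∧ (x = wit F ∨ G.Adj (wit F) x)) ↔ x ∈ F := by
    intro F hF x
    simp only [wit, dif_pos hF]
    exact (hw F hF).choose_spec x
  have winj : ∀ F1 F2 : Finset V, F1 ⊆ S → F2 ⊆ S → wit F1 = wit F2 → F1 = F2 := by
    intro F1 F2 h1 h2 heq
    ext x
    rw [← hwit F1 h1 x, ← hwit F2 h2 x, heq]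
  have hunion_sub : ∀ (b : B) (Y : Finset V), Y ⊆ R → T b ∪ Y ⊆ S := by
    intro b Y hY
    exact Finset.union_subset ((hTsub b).trans hA'S) (hY.trans hRS)
  have hunion_inter : ∀ (b : B) (Y : Finset V), Y ⊆ R → (T b ∪ Y) ∩ R = Y := by
    intro b Y hY
    ext x
    simp only [Finset.mem_inter, Finset.mem_union]
    constructor
    · rintro ⟨hx1 | hx1, hx2⟩
      · exact ((Finset.mem_sdiff.mp hx2).2 (hTsub b hx1)).elim
      · exact hx1
    · exact fun h => ⟨Or.inr h, hY h⟩
  -- good sets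
  let Gd : B → Finset (Finset V) := fun b =>
    R.powerset.filter fun Y => wit (T b ∪ Y) ∉ A'
  have hGdcard : ∀ b, k ≤ (Gd b).card := by
    intro b
    set Bad := R.powerset.filter fun Y => wit (T b ∪ Y) ∈ A' with hBad
    have hbadle : Bad.card ≤ k := by
      rw [← hA'card]
      apply Finset.card_le_card_of_injOn (fun Y => wit (T b ∪ Y))
      · intro Y hY
        exact (Finset.mem_filter.mp hY).2
      · intro Y1 hY1 Y2 hY2 heq
        have h1 := Finset.mem_powerset.mp (Finset.mem_filter.mp hY1).1
        have h2 := Finset.mem_powerset.mp (Finset.mem_filter.mp hY2).1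
        have := winj _ _ (hunion_sub b Y1 h1) (hunion_sub b Y2 h2) heq
        exact (hunion_inter b Y1 h1).symm.trans
          (by rw [this, hunion_inter b Y2 h2])
    have hsplit : (Gd b).card + Bad.card = 2 ^ c := by
      have := Finset.card_filter_add_card_filter_not
        (s := R.powerset) (p := fun Y => wit (T b ∪ Y) ∉ A')
      rw [Finset.card_powerset, hRcard] at this
      rw [← this]
      congr 1
      · rw [hBad]
        congr 1
        ext Y
        simp [not_not]
    omega
  -- Hall
  have hall : ∀ s : Finset B, s.card ≤ (s.biUnion Gd).card := by
    intro s
    rcases s.eq_empty_or_nonempty with rfl | ⟨b, hb⟩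
    · simp
    · calc s.card ≤ Fintype.card B := by
            simpa [Finset.card_univ] using Finset.card_le_card (Finset.subset_univ s)
        _ ≤ k := hB
        _ ≤ (Gd b).card := hGdcard b
        _ ≤ (s.biUnion Gd).card :=
            Finset.card_le_card (Finset.subset_biUnion_of_mem Gd hb)
  obtain ⟨ψ, hψinj, hψmem⟩ :=
    (Finset.all_card_le_biUnion_card_iff_exists_injective Gd).mp hall
  have hψR : ∀ b, ψ b ⊆ R := fun b =>
    Finset.mem_powerset.mp (Finset.mem_filter.mp (hψmem b)).1
  have hψnA' : ∀ b, wit (T b ∪ ψ b) ∉ A' := fun b =>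
    (Finset.mem_filter.mp (hψmem b)).2
  refine ⟨Sum.elim (fun a => (eA a : V)) (fun b => wit (T b ∪ ψ b)), ?_, ?_⟩
  · intro x y hxy
    cases x with
    | inl a1 =>
      cases y with
      | inl a2 =>
        simp only [Sum.elim_inl] at hxy
        exact congrArg Sum.inl (eA.injective (Subtype.coe_injective hxy))
      | inr b =>
        simp only [Sum.elim_inl, Sum.elim_inr] at hxy
        exact absurd ((hxy ▸ (eA a1).2 : wit (T b ∪ ψ b) ∈ A')) (hψnA' b)
    | inr b1 =>
      cases y with
      | inl a2 =>
        simp only [Sum.elim_inl, Sum.elim_inr] at hxy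
        exact absurd ((hxy ▸ (eA a2).2 : wit (T b1 ∪ ψ b1) ∈ A')) (hψnA' b1)
      | inr b2 =>
        simp only [Sum.elim_inr] at hxy
        have := winj _ _ (hunion_sub b1 _ (hψR b1)) (hunion_sub b2 _ (hψR b2)) hxy
        have e12 : ψ b1 = ψ b2 := (hunion_inter b1 _ (hψR b1)).symm.trans
          (by rw [this, hunion_inter b2 _ (hψR b2)])
        exact congrArg Sum.inr (hψinj e12)
  · intro a b
    simp only [Sum.elim_inl, Sum.elim_inr]
    have hmemS : (eA a : V) ∈ S := hA'S (eA a).2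
    have key := hwit (T b ∪ ψ b) (hunion_sub b _ (hψR b)) (eA a)
    have hne : (eA a : V) ≠ wit (T b ∪ ψ b) := fun h => hψnA' b (h ▸ (eA a).2)
    have hnY : (eA a : V) ∉ ψ b := fun h =>
      (Finset.mem_sdiff.mp (hψR b h)).2 (eA a).2
    have hTiff : (eA a : V) ∈ T b ↔ HE a b := by
      simp only [T, Finset.mem_image, Finset.mem_filter, Finset.mem_univ, true_and]
      constructor
      · rintro ⟨a', ha', heq⟩
        rwa [eA.injective (Subtype.coe_injective heq)] at ha'
      · exact fun h => ⟨a, h, rfl⟩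
    rw [G.adj_comm]
    constructor
    · intro hadj
      have := key.mp ⟨hmemS, Or.inr hadj⟩
      rcases Finset.mem_union.mp this with h | h
      · exact hTiff.mp h
      · exact absurd h hnY
    · intro hhe
      have := key.mpr (Finset.mem_union_left _ (hTiff.mpr hhe))
      rcases this.2 with h | h
      · exact absurd h hne
      · exact h
end
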